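/- arXiv:1905.09256 — 2 statements merged into one kernel-verified Lean document; each statement's English description precedes it below -/
import Mathlib

section
/- Let G be an X-generated group. Then F(G) is generated, as an F-inverse monoid (i.e., as an algebra under ·, ⁻¹, m and 1), by the set {(Γ_x, x_G) : x ∈ X}: the smallest subset of F(G) containing these elements and 1 and closed under multiplication, inversion and the max-operation m(Γ,g) = (Δ_g, g) is all of F(G). -/
namespace FInvPaper

universe u v w

section Generic
variable {S : Type u}

/-- The natural partial order on an inverse monoid: `a ≤ b` iff `a = b·e` for some idempotent. -/
def nle [Mul S] (a b : S) : Prop := ∃ e : S, e * e = e ∧ a = b * e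

/-- The minimum group congruence σ: `a σ b` iff `a·e = b·e` for some idempotent `e`. -/
def sigma [Mul S] (a b : S) : Prop := ∃ e : S, e * e = e ∧ a * e = b * e

/-- `m` assigns to every element the maximum element of its σ-class. -/
def IsMaxOp [Mul S] (m : S → S) : Prop :=
  ∀ a : S, sigma (m a) a ∧ ∀ b : S, sigma b a → nle b (m a)

/-- A subset of `S` which is an entire σ-class. -/
def IsSigmaClass [Mul S] (A : Set S) : Prop := ∃ a : S, A = {b : S | sigma b a}

end Generic

/-- Inverse monoids: monoids with an involution satisfying `a·a⁻¹·a = a`, `(a·b)⁻¹ = b⁻¹·a⁻¹`,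
in which all idempotents commute. -/
class InverseMonoid (S : Type u) extends Monoid S, Inv S where
  inv_inv : ∀ a : S, a⁻¹⁻¹ = a
  mul_inv_rev : ∀ a b : S, (a * b)⁻¹ = b⁻¹ * a⁻¹
  mul_inv_self_mul : ∀ a : S, a * a⁻¹ * a = a
  idem_comm : ∀ e f : S, e * e = e → f * f = f → e * f = f * e

/-- F-inverse monoids in the enriched signature `(·, ⁻¹, ᵐ, 1)`. -/
class FInverseMonoid (S : Type u) extends InverseMonoid S where
  mx : S → S
  mx_isMaxOp : IsMaxOp mx

/-- The max-operation of an F-inverse monoid. -/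
def mx {S : Type u} [FInverseMonoid S] : S → S := FInverseMonoid.mx

section InverseMonoidLemmas

variable {S : Type u} [InverseMonoid S]

lemma mul_inv_idem (a : S) : (a * a⁻¹) * (a * a⁻¹) = a * a⁻¹ := by
  conv_lhs => rw [← mul_assoc, InverseMonoid.mul_inv_self_mul]

lemma inv_mul_self_mul (a : S) : a⁻¹ * a * a⁻¹ = a⁻¹ := by
  have h := InverseMonoid.mul_inv_self_mul (a := a⁻¹)
  rwa [InverseMonoid.inv_inv] at h

lemma inv_mul_idem (a : S) : (a⁻¹ * a) * (a⁻¹ * a) = a⁻¹ * a := by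
  conv_lhs => rw [← mul_assoc, inv_mul_self_mul]

lemma idem_inv {e : S} (he : e * e = e) : e⁻¹ = e := by
  have h1 : e⁻¹ * e⁻¹ = e⁻¹ := by rw [← InverseMonoid.mul_inv_rev, he]
  have hc : e * e⁻¹ = e⁻¹ * e := InverseMonoid.idem_comm e e⁻¹ he h1
  have h2 : e = e * e⁻¹ := by
    calc e = e * e⁻¹ * e := (InverseMonoid.mul_inv_self_mul e).symm
    _ = e * (e⁻¹ * e) := mul_assoc _ _ _
    _ = e * (e * e⁻¹) := by rw [hc]
    _ = e * e * e⁻¹ := (mul_assoc _ _ _).symm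
    _ = e * e⁻¹ := by rw [he]
  have h3 : e⁻¹ = e⁻¹ * e := by
    calc e⁻¹ = e⁻¹ * e * e⁻¹ := (inv_mul_self_mul e).symm
    _ = e⁻¹ * (e * e⁻¹) := mul_assoc _ _ _
    _ = e⁻¹ * (e⁻¹ * e) := by rw [hc]
    _ = e⁻¹ * e⁻¹ * e := (mul_assoc _ _ _).symm
    _ = e⁻¹ * e := by rw [h1]
  rw [h3, ← hc, ← h2]

lemma idem_mul_idem {e f : S} (he : e * e = e) (hf : f * f = f) :
    (e * f) * (e * f) = e * f := by
  calc (e * f) * (e * f) = e * (f * (e * f)) := mul_assoc _ _ _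
  _ = e * (f * e * f) := by rw [← mul_assoc f e f]
  _ = e * (e * f * f) := by rw [← InverseMonoid.idem_comm e f he hf]
  _ = e * (e * (f * f)) := by rw [mul_assoc e f f]
  _ = e * (e * f) := by rw [hf]
  _ = e * e * f := (mul_assoc _ _ _).symm
  _ = e * f := by rw [he]

lemma sigma_refl (a : S) : sigma a a := ⟨1, one_mul 1, rfl⟩

lemma sigma_symm {a b : S} (h : sigma a b) : sigma b a := by
  obtain ⟨e, he, hab⟩ := h
  exact ⟨e, he, hab.symm⟩

lemma sigma_trans {a b c : S} (h₁ : sigma a b) (h₂ : sigma b c) : sigma a c := by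
  obtain ⟨e, he, h1⟩ := h₁
  obtain ⟨f, hf, h2⟩ := h₂
  refine ⟨e * f, idem_mul_idem he hf, ?_⟩
  calc a * (e * f) = a * e * f := (mul_assoc _ _ _).symm
  _ = b * e * f := by rw [h1]
  _ = b * (e * f) := mul_assoc _ _ _
  _ = b * (f * e) := by rw [InverseMonoid.idem_comm e f he hf]
  _ = b * f * e := (mul_assoc _ _ _).symm
  _ = c * f * e := by rw [h2]
  _ = c * (f * e) := mul_assoc _ _ _
  _ = c * (e * f) := by rw [InverseMonoid.idem_comm e f he hf]

lemma sigma_mul_left {a b : S} (c : S) (h : sigma a b) : sigma (c * a) (c * b) := by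
  obtain ⟨e, he, hab⟩ := h
  exact ⟨e, he, by rw [mul_assoc, hab, ← mul_assoc]⟩

lemma inner_lemma {e : S} (he : e * e = e) (a : S) :
    a⁻¹ * (a * e * a⁻¹) = e * a⁻¹ := by
  calc a⁻¹ * (a * e * a⁻¹) = a⁻¹ * (a * e) * a⁻¹ := by rw [← mul_assoc a⁻¹ (a * e) a⁻¹]
  _ = a⁻¹ * a * e * a⁻¹ := by rw [← mul_assoc a⁻¹ a e]
  _ = e * (a⁻¹ * a) * a⁻¹ := by rw [InverseMonoid.idem_comm (a⁻¹ * a) e (inv_mul_idem a) he]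
  _ = e * (a⁻¹ * a * a⁻¹) := by rw [mul_assoc e (a⁻¹ * a) a⁻¹]
  _ = e * a⁻¹ := by rw [inv_mul_self_mul]

lemma sigma_inv {a b : S} (h : sigma a b) : sigma a⁻¹ b⁻¹ := by
  obtain ⟨e, he, hab⟩ := h
  have key5 : e * a⁻¹ = e * b⁻¹ := by
    have h' : (a * e)⁻¹ = (b * e)⁻¹ := by rw [hab]
    rwa [InverseMonoid.mul_inv_rev, InverseMonoid.mul_inv_rev, idem_inv he] at h'
  have key1 : (a * e * a⁻¹) * (a * e * a⁻¹) = a * e * a⁻¹ := by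
    calc (a * e * a⁻¹) * (a * e * a⁻¹) = a * e * (a⁻¹ * (a * e * a⁻¹)) := mul_assoc _ _ _
    _ = a * e * (e * a⁻¹) := by rw [inner_lemma he a]
    _ = a * e * e * a⁻¹ := (mul_assoc _ _ _).symm
    _ = a * (e * e) * a⁻¹ := by rw [mul_assoc a e e]
    _ = a * e * a⁻¹ := by rw [he]
  have key3 : a * e * a⁻¹ = b * e * b⁻¹ := by
    calc a * e * a⁻¹ = a * (e * e) * a⁻¹ := by rw [he]
    _ = a * e * e * a⁻¹ := by rw [← mul_assoc a e e]
    _ = a * e * (e * a⁻¹) := mul_assoc _ _ _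
    _ = a * e * (e * b⁻¹) := by rw [key5]
    _ = b * e * (e * b⁻¹) := by rw [hab]
    _ = b * e * e * b⁻¹ := (mul_assoc _ _ _).symm
    _ = b * (e * e) * b⁻¹ := by rw [mul_assoc b e e]
    _ = b * e * b⁻¹ := by rw [he]
  refine ⟨a * e * a⁻¹, key1, ?_⟩
  rw [inner_lemma he a, key5, key3, inner_lemma he b]

lemma sigma_mul_right {a b : S} (c : S) (h : sigma a b) : sigma (a * c) (b * c) := by
  have h1 := sigma_mul_left c⁻¹ (sigma_inv h)
  have h2 := sigma_inv h1
  rwa [InverseMonoid.mul_inv_rev c⁻¹ a⁻¹, InverseMonoid.mul_inv_rev c⁻¹ b⁻¹,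
    InverseMonoid.inv_inv, InverseMonoid.inv_inv, InverseMonoid.inv_inv] at h2

instance sigmaSetoid (S : Type u) [InverseMonoid S] : Setoid S where
  r := sigma
  iseqv := ⟨sigma_refl, sigma_symm, sigma_trans⟩

/-- The maximum group quotient `S/σ`. -/
def GQuot (S : Type u) [InverseMonoid S] : Type u := Quotient (sigmaSetoid S)

/-- The σ-class of an element, as an element of the maximum group quotient. -/
def σclass {S : Type u} [InverseMonoid S] (a : S) : GQuot S := Quotient.mk (sigmaSetoid S) a

instance (S : Type u) [InverseMonoid S] : Group (GQuot S) where
  mul := Quotient.map₂ (· * ·) (fun _ _ h₁ _ _ h₂ =>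
    sigma_trans (sigma_mul_right _ h₁) (sigma_mul_left _ h₂))
  one := σclass 1
  inv := Quotient.map (·⁻¹) (fun _ _ h => sigma_inv h)
  mul_assoc := by
    intro a b c
    induction a using Quotient.ind
    induction b using Quotient.ind
    induction c using Quotient.ind
    exact congrArg (Quotient.mk _) (mul_assoc _ _ _)
  one_mul := by
    intro a
    induction a using Quotient.ind
    exact congrArg (Quotient.mk _) (one_mul _)
  mul_one := by
    intro a
    induction a using Quotient.ind
    exact congrArg (Quotient.mk _) (mul_one _)
  inv_mul_cancel := by
    intro a
    induction a using Quotient.ind with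
    | _ a =>
      refine Quotient.sound ⟨a⁻¹ * a, inv_mul_idem a, ?_⟩
      rw [one_mul]
      exact inv_mul_idem a

end InverseMonoidLemmas


section Graphs

variable {G : Type u} [Group G] {X : Type v}

/-- A subgraph of the Cayley graph `Cay(G)` of the `X`-generated group `G` (with assignment
mapping `φ : X → G`), represented by its set of vertices and its set of positive edges:
the positive edge `(g, x)` goes from `g` to `g * φ x` and carries the label `x`; every
subgraph closed under edge inversion is uniquely determined by this data. -/
structure Subgraph (φ : X → G) : Type (max u v) where
  verts : Set G
  edges : Set (G × X)
  src_mem : ∀ e ∈ edges, Prod.fst e ∈ verts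
  tgt_mem : ∀ e ∈ edges, e.1 * φ e.2 ∈ verts

namespace Subgraph

variable {φ : X → G}

lemma ext' {Γ Δ : Subgraph φ} (hv : Γ.verts = Δ.verts) (he : Γ.edges = Δ.edges) : Γ = Δ := by
  cases Γ; cases Δ; cases hv; cases he; rfl

/-- Union of subgraphs. -/
def union (Γ Δ : Subgraph φ) : Subgraph φ where
  verts := Γ.verts ∪ Δ.verts
  edges := Γ.edges ∪ Δ.edges
  src_mem := by
    intro e he
    rcases he with h | h
    · exact Set.mem_union_left _ (Γ.src_mem e h)
    · exact Set.mem_union_right _ (Δ.src_mem e h)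
  tgt_mem := by
    intro e he
    rcases he with h | h
    · exact Set.mem_union_left _ (Γ.tgt_mem e h)
    · exact Set.mem_union_right _ (Δ.tgt_mem e h)

instance : Union (Subgraph φ) := ⟨union⟩

@[simp] lemma union_verts (Γ Δ : Subgraph φ) : (Γ ∪ Δ).verts = Γ.verts ∪ Δ.verts := rfl
@[simp] lemma union_edges (Γ Δ : Subgraph φ) : (Γ ∪ Δ).edges = Γ.edges ∪ Δ.edges := rfl

/-- Left translation of a subgraph by a group element. -/
def smul (g : G) (Γ : Subgraph φ) : Subgraph φ where
  verts := (g * ·) '' Γ.verts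
  edges := (fun e => (g * e.1, e.2)) '' Γ.edges
  src_mem := by
    rintro e ⟨e', he', rfl⟩
    exact ⟨e'.1, Γ.src_mem e' he', rfl⟩
  tgt_mem := by
    rintro e ⟨e', he', rfl⟩
    exact ⟨e'.1 * φ e'.2, Γ.tgt_mem e' he', (mul_assoc g e'.1 (φ e'.2)).symm⟩

instance : SMul G (Subgraph φ) := ⟨smul⟩

@[simp] lemma smul_verts (g : G) (Γ : Subgraph φ) : (g • Γ).verts = (g * ·) '' Γ.verts := rfl
@[simp] lemma smul_edges (g : G) (Γ : Subgraph φ) :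
    (g • Γ).edges = (fun e : G × X => (g * e.1, e.2)) '' Γ.edges := rfl

/-- The subgraph relation. -/
instance : HasSubset (Subgraph φ) := ⟨fun Γ Δ => Γ.verts ⊆ Δ.verts ∧ Γ.edges ⊆ Δ.edges⟩

lemma subset_iff (Γ Δ : Subgraph φ) : Γ ⊆ Δ ↔ Γ.verts ⊆ Δ.verts ∧ Γ.edges ⊆ Δ.edges := Iff.rfl

/-- Finiteness of a subgraph. -/
def IsFinite (Γ : Subgraph φ) : Prop := Γ.verts.Finite ∧ Γ.edges.Finite

/-- A subgraph has no isolated vertices if each of its vertices is an endpoint of one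
of its edges. -/
def NoIsolated (Γ : Subgraph φ) : Prop :=
  ∀ v ∈ Γ.verts, ∃ e ∈ Γ.edges, v = e.1 ∨ v = e.1 * φ e.2

/-- `Ed(Γ)`: the subgraph spanned by the edges of `Γ`, i.e. `Γ` with all isolated vertices
removed. -/
def ed (Γ : Subgraph φ) : Subgraph φ where
  verts := {v | ∃ e ∈ Γ.edges, v = e.1 ∨ v = e.1 * φ e.2}
  edges := Γ.edges
  src_mem := fun e he => ⟨e, he, Or.inl rfl⟩
  tgt_mem := fun e he => ⟨e, he, Or.inr rfl⟩

lemma ed_finite {Γ : Subgraph φ} (h : Γ.IsFinite) : Γ.ed.IsFinite := by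
  constructor
  · have hsub : Γ.ed.verts ⊆
        (fun e : G × X => e.1) '' Γ.edges ∪ (fun e : G × X => e.1 * φ e.2) '' Γ.edges := by
      rintro v ⟨e, he, rfl | rfl⟩
      · exact Set.mem_union_left _ ⟨e, he, rfl⟩
      · exact Set.mem_union_right _ ⟨e, he, rfl⟩
    exact ((h.2.image _).union (h.2.image _)).subset hsub
  · exact h.2

lemma ed_noIsolated (Γ : Subgraph φ) : Γ.ed.NoIsolated := fun _ hv => hv

end Subgraph

open Subgraph

variable {φ : X → G}

/-- The subgraph with the single vertex `g` and no edges. -/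
def vertexG (φ : X → G) (g : G) : Subgraph φ :=
  ⟨{g}, ∅, by simp, by simp⟩

/-- `Δ_g`: the edgeless subgraph with vertices `1` and `g`. -/
def deltaG (φ : X → G) (g : G) : Subgraph φ :=
  ⟨{1, g}, ∅, by simp, by simp⟩

/-- The subgraph spanned by a single (positive) edge. -/
def edgeG (φ : X → G) (e : G × X) : Subgraph φ where
  verts := {e.1, e.1 * φ e.2}
  edges := {e}
  src_mem := by
    intro e' he'
    rw [Set.mem_singleton_iff] at he'
    subst he'
    exact Set.mem_insert _ _
  tgt_mem := by
    intro e' he'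
    rw [Set.mem_singleton_iff] at he'
    subst he'
    exact Set.mem_insert_of_mem _ rfl

/-- The empty subgraph. -/
def emptyG (φ : X → G) : Subgraph φ := ⟨∅, ∅, by simp, by simp⟩

lemma edgeG_noIsolated (φ : X → G) (e : G × X) : (edgeG φ e).NoIsolated := by
  intro v hv
  refine ⟨e, Set.mem_singleton e, ?_⟩
  simpa [edgeG] using hv

/-- Two vertices are adjacent in `Γ` if they are connected by an edge of `Γ`. -/
def adj (Γ : Subgraph φ) (u v : G) : Prop :=
  ∃ e ∈ Γ.edges, (u = e.1 ∧ v = e.1 * φ e.2) ∨ (v = e.1 ∧ u = e.1 * φ e.2)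

/-- A subgraph is connected if any two of its vertices are joined by a path running in it. -/
def Connected (Γ : Subgraph φ) : Prop :=
  ∀ u ∈ Γ.verts, ∀ v ∈ Γ.verts, Relation.ReflTransGen (adj Γ) u v

lemma adj_mono {Γ Δ : Subgraph φ} (h : Γ.edges ⊆ Δ.edges) {u v : G} (ha : adj Γ u v) :
    adj Δ u v := by
  obtain ⟨e, he, hc⟩ := ha
  exact ⟨e, h he, hc⟩

lemma Connected.union {Γ Δ : Subgraph φ} (hΓ : Connected Γ) (hΔ : Connected Δ) (w : G)
    (hw₁ : w ∈ Γ.verts) (hw₂ : w ∈ Δ.verts) : Connected (Γ ∪ Δ) := by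
  have hsΓ : Γ.edges ⊆ (Γ ∪ Δ).edges := by
    rw [union_edges]; exact Set.subset_union_left
  have hsΔ : Δ.edges ⊆ (Γ ∪ Δ).edges := by
    rw [union_edges]; exact Set.subset_union_right
  have mΓ : ∀ {p q : G}, Relation.ReflTransGen (adj Γ) p q →
      Relation.ReflTransGen (adj (Γ ∪ Δ)) p q :=
    fun h => Relation.ReflTransGen.mono (fun _ _ h' => adj_mono hsΓ h') _ _ h
  have mΔ : ∀ {p q : G}, Relation.ReflTransGen (adj Δ) p q →
      Relation.ReflTransGen (adj (Γ ∪ Δ)) p q :=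
    fun h => Relation.ReflTransGen.mono (fun _ _ h' => adj_mono hsΔ h') _ _ h
  intro u hu v hv
  rw [union_verts] at hu hv
  rcases hu with hu | hu <;> rcases hv with hv | hv
  · exact mΓ (hΓ u hu v hv)
  · exact (mΓ (hΓ u hu w hw₁)).trans (mΔ (hΔ w hw₂ v hv))
  · exact (mΔ (hΔ u hu w hw₂)).trans (mΓ (hΓ w hw₁ v hv))
  · exact mΔ (hΔ u hu v hv)

lemma Connected.smul {Γ : Subgraph φ} (g : G) (h : Connected Γ) : Connected (g • Γ) := by
  intro u hu v hv
  rw [smul_verts] at hu hv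
  obtain ⟨u', hu', rfl⟩ := hu
  obtain ⟨v', hv', rfl⟩ := hv
  refine Relation.ReflTransGen.lift (fun z => g * z) ?_ _ _ (h u' hu' v' hv')
  rintro p q ⟨e, he, hc⟩
  show adj (g • Γ) (g * p) (g * q)
  refine ⟨(g * e.1, e.2), ?_, ?_⟩
  · rw [smul_edges]; exact ⟨e, he, rfl⟩
  · rcases hc with ⟨rfl, rfl⟩ | ⟨rfl, rfl⟩
    · exact Or.inl ⟨rfl, (mul_assoc _ _ _).symm⟩
    · exact Or.inr ⟨rfl, (mul_assoc _ _ _).symm⟩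

lemma Subgraph.NoIsolated.union {Γ Δ : Subgraph φ} (hΓ : Γ.NoIsolated) (hΔ : Δ.NoIsolated) :
    (Γ ∪ Δ).NoIsolated := by
  intro v hv
  rw [union_verts] at hv
  rcases hv with hv | hv
  · obtain ⟨e, he, hor⟩ := hΓ v hv
    exact ⟨e, by rw [union_edges]; exact Set.mem_union_left _ he, hor⟩
  · obtain ⟨e, he, hor⟩ := hΔ v hv
    exact ⟨e, by rw [union_edges]; exact Set.mem_union_right _ he, hor⟩

lemma Subgraph.NoIsolated.smul {Γ : Subgraph φ} (g : G) (h : Γ.NoIsolated) :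
    (g • Γ).NoIsolated := by
  intro v hv
  rw [smul_verts] at hv
  obtain ⟨u, hu, rfl⟩ := hv
  obtain ⟨e, he, hor⟩ := h u hu
  refine ⟨(g * e.1, e.2), by rw [smul_edges]; exact ⟨e, he, rfl⟩, ?_⟩
  rcases hor with rfl | rfl
  · exact Or.inl rfl
  · exact Or.inr (mul_assoc _ _ _).symm

end Graphs


section Expansions

variable {G : Type u} [Group G] {X : Type v} {φ : X → G}

open Subgraph

/-- `F(G)`: pairs `(Γ, g)` where `Γ` is a finite subgraph of `Cay(G)` having `1` and `g`
among its vertices. -/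
structure FExp (φ : X → G) : Type (max u v) where
  graph : Subgraph φ
  elt : G
  finite : graph.IsFinite
  one_mem : (1 : G) ∈ graph.verts
  elt_mem : elt ∈ graph.verts

namespace FExp

lemma ext' {a b : FExp φ} (hg : a.graph = b.graph) (he : a.elt = b.elt) : a = b := by
  cases a; cases b; cases hg; cases he; rfl

instance : Mul (FExp φ) :=
  ⟨fun a b =>
    { graph := a.graph ∪ a.elt • b.graph
      elt := a.elt * b.elt
      finite := ⟨by
          rw [union_verts, smul_verts]
          exact a.finite.1.union (b.finite.1.image _),
        by
          rw [union_edges, smul_edges]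
          exact a.finite.2.union (b.finite.2.image _)⟩
      one_mem := by
        rw [union_verts]
        exact Set.mem_union_left _ a.one_mem
      elt_mem := by
        rw [union_verts]
        refine Set.mem_union_right _ ?_
        rw [smul_verts]
        exact ⟨b.elt, b.elt_mem, rfl⟩ }⟩

@[simp] lemma mul_graph (a b : FExp φ) : (a * b).graph = a.graph ∪ a.elt • b.graph := rfl
@[simp] lemma mul_elt (a b : FExp φ) : (a * b).elt = a.elt * b.elt := rfl

instance : One (FExp φ) :=
  ⟨{ graph := deltaG φ 1
     elt := 1
     finite := ⟨(Set.finite_singleton (1 : G)).insert 1, Set.finite_empty⟩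
     one_mem := Set.mem_insert 1 _
     elt_mem := Set.mem_insert 1 _ }⟩

@[simp] lemma one_graph : (1 : FExp φ).graph = deltaG φ 1 := rfl
@[simp] lemma one_elt : (1 : FExp φ).elt = 1 := rfl

instance : Inv (FExp φ) :=
  ⟨fun a =>
    { graph := a.elt⁻¹ • a.graph
      elt := a.elt⁻¹
      finite := ⟨by rw [smul_verts]; exact a.finite.1.image _,
        by rw [smul_edges]; exact a.finite.2.image _⟩
      one_mem := by
        rw [smul_verts]
        exact ⟨a.elt, a.elt_mem, inv_mul_cancel a.elt⟩
      elt_mem := by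
        rw [smul_verts]
        exact ⟨1, a.one_mem, mul_one _⟩ }⟩

@[simp] lemma inv_graph (a : FExp φ) : (a⁻¹).graph = a.elt⁻¹ • a.graph := rfl
@[simp] lemma inv_elt (a : FExp φ) : (a⁻¹).elt = a.elt⁻¹ := rfl

end FExp

/-- The element `(Δ_g, g)` of `F(G)`. -/
def maxElt (φ : X → G) (g : G) : FExp φ where
  graph := deltaG φ g
  elt := g
  finite := ⟨(Set.finite_singleton g).insert 1, Set.finite_empty⟩
  one_mem := Set.mem_insert 1 _
  elt_mem := Set.mem_insert_of_mem _ rfl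

/-- The max-operation `(Γ, g) ↦ (Δ_g, g)` on `F(G)`. -/
def mxOp (a : FExp φ) : FExp φ := maxElt φ a.elt

/-- The generator `(Γ_x, x_G)` of `F(G)`. -/
def genElt (φ : X → G) (x : X) : FExp φ where
  graph := edgeG φ (1, x)
  elt := φ x
  finite := ⟨(Set.finite_singleton _).insert _, Set.finite_singleton _⟩
  one_mem := Set.mem_insert 1 _
  elt_mem := by simp [edgeG]

/-- `M(G)`: the Margolis–Meakin expansion; pairs `(Γ, g)` where `Γ` is a finite *connected*
subgraph of `Cay(G)` having `1` and `g` among its vertices. -/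
structure MExp (φ : X → G) : Type (max u v) where
  graph : Subgraph φ
  elt : G
  finite : graph.IsFinite
  connected : Connected graph
  one_mem : (1 : G) ∈ graph.verts
  elt_mem : elt ∈ graph.verts

namespace MExp

instance : Mul (MExp φ) :=
  ⟨fun a b =>
    { graph := a.graph ∪ a.elt • b.graph
      elt := a.elt * b.elt
      finite := ⟨by
          rw [union_verts, smul_verts]
          exact a.finite.1.union (b.finite.1.image _),
        by
          rw [union_edges, smul_edges]
          exact a.finite.2.union (b.finite.2.image _)⟩
      connected := by
        refine Connected.union a.connected (Connected.smul a.elt b.connected) a.elt a.elt_mem ?_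
        rw [smul_verts]
        exact ⟨1, b.one_mem, mul_one _⟩
      one_mem := by
        rw [union_verts]
        exact Set.mem_union_left _ a.one_mem
      elt_mem := by
        rw [union_verts]
        refine Set.mem_union_right _ ?_
        rw [smul_verts]
        exact ⟨b.elt, b.elt_mem, rfl⟩ }⟩

end MExp

/-- `P(G)`: pairs `(Γ, g)` where `Γ` is a finite subgraph of `Cay(G)` without isolated
vertices and `g ∈ G` (a model of the semidirect product of the semilattice of such
subgraphs by `G`). -/
structure PExp (φ : X → G) : Type (max u v) where
  graph : Subgraph φ
  elt : G
  finite : graph.IsFinite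
  noIsolated : graph.NoIsolated

namespace PExp

lemma ext' {a b : PExp φ} (hg : a.graph = b.graph) (he : a.elt = b.elt) : a = b := by
  cases a; cases b; cases hg; cases he; rfl

instance : Mul (PExp φ) :=
  ⟨fun a b =>
    { graph := a.graph ∪ a.elt • b.graph
      elt := a.elt * b.elt
      finite := ⟨by
          rw [union_verts, smul_verts]
          exact a.finite.1.union (b.finite.1.image _),
        by
          rw [union_edges, smul_edges]
          exact a.finite.2.union (b.finite.2.image _)⟩
      noIsolated := a.noIsolated.union (b.noIsolated.smul a.elt) }⟩

@[simp] lemma mul_graph (a b : PExp φ) : (a * b).graph = a.graph ∪ a.elt • b.graph := rfl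
@[simp] lemma mul_elt (a b : PExp φ) : (a * b).elt = a.elt * b.elt := rfl

instance : One (PExp φ) :=
  ⟨{ graph := emptyG φ
     elt := 1
     finite := ⟨Set.finite_empty, Set.finite_empty⟩
     noIsolated := by intro v hv; simp [emptyG] at hv }⟩

@[simp] lemma one_graph : (1 : PExp φ).graph = emptyG φ := rfl
@[simp] lemma one_elt : (1 : PExp φ).elt = 1 := rfl

instance : Inv (PExp φ) :=
  ⟨fun a =>
    { graph := a.elt⁻¹ • a.graph
      elt := a.elt⁻¹
      finite := ⟨by rw [smul_verts]; exact a.finite.1.image _,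
        by rw [smul_edges]; exact a.finite.2.image _⟩
      noIsolated := a.noIsolated.smul _ }⟩

@[simp] lemma inv_graph (a : PExp φ) : (a⁻¹).graph = a.elt⁻¹ • a.graph := rfl
@[simp] lemma inv_elt (a : PExp φ) : (a⁻¹).elt = a.elt⁻¹ := rfl

end PExp

/-- The max-operation `(Γ, g) ↦ (∅, g)` on `P(G)`. -/
def pMax (a : PExp φ) : PExp φ where
  graph := emptyG φ
  elt := a.elt
  finite := ⟨Set.finite_empty, Set.finite_empty⟩
  noIsolated := by intro v hv; simp [emptyG] at hv

/-- The generator `(Γ_x, x_G)` of `P(G)`. -/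
def genEltP (φ : X → G) (x : X) : PExp φ where
  graph := edgeG φ (1, x)
  elt := φ x
  finite := ⟨(Set.finite_singleton _).insert _, Set.finite_singleton _⟩
  noIsolated := edgeG_noIsolated φ (1, x)

/-- The canonical map `F(G) → P(G)`, `(Γ, g) ↦ (Ed(Γ), g)`. -/
def edMap (a : FExp φ) : PExp φ where
  graph := a.graph.ed
  elt := a.elt
  finite := ed_finite a.finite
  noIsolated := a.graph.ed_noIsolated

/-- The relation `θ` on `F(G)`: `(Γ,g) θ (Ξ,h)` iff `g = h` and `Ed(Γ) = Ed(Ξ)`. -/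
def thetaRel (φ : X → G) (a b : FExp φ) : Prop := a.elt = b.elt ∧ a.graph.ed = b.graph.ed

end Expansions

section Terms

variable {X : Type v}

/-- Terms of the term algebra `I^m_X` in their (unique) normal form
`u₀ · m(v₁) · u₁ ⋯ u_{n-1} · m(vₙ) · uₙ` with `uᵢ, vⱼ` words in the free monoid with
involution `I_X` on `X` (represented as lists over `X ⊕ X`, where `inl x` stands for `x`
and `inr x` for `x⁻¹`): the first component is `u₀`, and the second lists the pairs
`(vᵢ, uᵢ)`. -/
abbrev MTerm (X : Type v) := List (X ⊕ X) × List (List (X ⊕ X) × List (X ⊕ X))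

/-- Value of a letter of `X ⊔ X⁻¹`. -/
def letterVal {M : Type w} [Monoid M] [Inv M] (f : X → M) : X ⊕ X → M
  | Sum.inl x => f x
  | Sum.inr x => (f x)⁻¹

/-- Value of a word of `I_X`. -/
def wordVal {M : Type w} [Monoid M] [Inv M] (f : X → M) (u : List (X ⊕ X)) : M :=
  (u.map (letterVal f)).prod

/-- Value `[t]` of a term `t ∈ I^m_X` under the assignment `f` of the generators,
where `mop` is interpreted as the operation `m`. -/
def termVal {M : Type w} [Monoid M] [Inv M] (f : X → M) (mop : M → M) (t : MTerm X) : M :=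
  wordVal f t.1 * (t.2.map (fun p => mop (wordVal f p.1) * wordVal f p.2)).prod

end Terms

section Journeys

variable {G : Type u} [Group G] {X : Type v}

/-- The subgraph of `Cay(G)` spanned by the path starting at `g` with label the given word;
for the empty word it is the single vertex `g`. -/
def pathGraph (φ : X → G) : G → List (X ⊕ X) → Subgraph φ
  | g, [] => vertexG φ g
  | g, Sum.inl x :: u => edgeG φ (g, x) ∪ pathGraph φ (g * φ x) u
  | g, Sum.inr x :: u => edgeG φ (g * (φ x)⁻¹, x) ∪ pathGraph φ (g * (φ x)⁻¹) u

/-- The subgraph of `Cay(G)` spanned by the journey `j_g(w)` induced by the term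
`w = u₀ · m(v₁) · u₁ ⋯ · m(vₙ) · uₙ` starting at `g`: traverse the path labelled `u₀`
from `g`, jump to `g·[u₀v₁]`, traverse the path labelled `u₁`, and so on. -/
def journeyGraph (φ : X → G) : G → List (X ⊕ X) → List (List (X ⊕ X) × List (X ⊕ X)) →
    Subgraph φ
  | g, u, [] => pathGraph φ g u
  | g, u, (v, u') :: rest =>
      pathGraph φ g u ∪ journeyGraph φ (g * wordVal φ u * wordVal φ v) u' rest

end Journeys

/-! The elements `(Γ, 1)` of `F(G)` multiply by taking unions of graphs, and every finite `Γ`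
containing `1` is a finite union of edgeless graphs `Δ_g` and of graphs `Δ_g ∪ {(g, x)}`.
These are the graphs of `a·a⁻¹` for `a = m(b)` and `a = m(b)·(Γ_x, x_G)` respectively, where `b`
is any element of the subalgebra lying over `g`; such `b` exists because `X` generates `G`.
Finally `(Γ, g) = (Γ, 1)·(Δ_g, g)`. -/

namespace Subgraph

variable {G : Type u} [Group G] {X : Type v} {φ : X → G}

instance : MulAction G (Subgraph φ) where
  one_smul Γ := ext' (by simp) (by simp)
  mul_smul g h Γ := ext' (by simp only [smul_verts, Set.image_image, mul_assoc])
    (by simp only [smul_edges, Set.image_image, mul_assoc])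

protected lemma union_self (Γ : Subgraph φ) : Γ ∪ Γ = Γ :=
  ext' (Set.union_self _) (Set.union_self _)

lemma smul_edgeG (g : G) (e : G × X) : g • edgeG φ e = edgeG φ (g * e.1, e.2) :=
  ext' (by simp [edgeG, Set.image_insert_eq, mul_assoc]) (by simp [edgeG])

def edgeless (φ : X → G) (V : Set G) : Subgraph φ := ⟨V, ∅, by simp, by simp⟩

section Induction

variable {P : Subgraph φ → Prop}

lemma edgeless_induction (hunion : ∀ Γ Δ, P Γ → P Δ → P (Γ ∪ Δ)) (hdelta : ∀ g, P (deltaG φ g))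
    {V : Set G} (hV : V.Finite) : P (edgeless φ (insert 1 V)) := by
  induction V, hV using Set.Finite.induction_on with
  | empty => simpa [edgeless, deltaG] using hdelta 1
  | @insert v V _ _ ih =>
    convert hunion _ _ ih (hdelta v) using 1
    refine ext' ?_ (Set.union_empty _).symm
    ext w
    simp only [edgeless, deltaG, union_verts, Set.mem_insert_iff, Set.mem_union,
      Set.mem_singleton_iff]
    tauto

lemma IsFinite.induction (hunion : ∀ Γ Δ, P Γ → P Δ → P (Γ ∪ Δ))
    (hdelta : ∀ g, P (deltaG φ g)) (hedge : ∀ e : G × X, P (deltaG φ e.1 ∪ edgeG φ e))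
    {Γ : Subgraph φ} (hΓ : Γ.IsFinite) (h1 : (1 : G) ∈ Γ.verts) : P Γ := by
  suffices ∀ E : Set (G × X), E.Finite → ∀ Γ : Subgraph φ, Γ.verts.Finite →
      (1 : G) ∈ Γ.verts → Γ.edges = E → P Γ from this _ hΓ.2 Γ hΓ.1 h1 rfl
  intro E hE
  induction E, hE using Set.Finite.induction_on with
  | empty =>
    intro Γ hV h1 hE'
    convert edgeless_induction hunion hdelta hV using 1
    exact ext' (Set.insert_eq_of_mem h1).symm hE'
  | @insert e E _ _ ih =>
    intro Γ hV h1 hE'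
    have hsub : E ⊆ Γ.edges := hE' ▸ Set.subset_insert e E
    have he : e ∈ Γ.edges := hE' ▸ Set.mem_insert e E
    let Γ' : Subgraph φ :=
      ⟨Γ.verts, E, fun f hf => Γ.src_mem f (hsub hf), fun f hf => Γ.tgt_mem f (hsub hf)⟩
    convert hunion Γ' _ (ih Γ' hV h1 rfl) (hedge e) using 1
    refine ext' ?_ ?_
    · refine (Set.union_eq_self_of_subset_right ?_).symm
      simp [deltaG, edgeG, Set.insert_subset_iff, h1, Γ.src_mem e he, Γ.tgt_mem e he]
    · simp only [union_edges, hE', deltaG, edgeG, Γ', Set.empty_union]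
      exact (Set.union_singleton ..).symm

end Induction

end Subgraph

namespace FExp

variable {G : Type u} [Group G] {X : Type v} {φ : X → G}

lemma mul_graph_of_elt_eq_one {a : FExp φ} (ha : a.elt = 1) (b : FExp φ) :
    (a * b).graph = a.graph ∪ b.graph := by
  rw [mul_graph, ha, one_smul]

lemma mul_inv_graph (a : FExp φ) : (a * a⁻¹).graph = a.graph := by
  rw [mul_graph, inv_graph, smul_smul, mul_inv_cancel, one_smul, Subgraph.union_self]

lemma mul_inv_elt (a : FExp φ) : (a * a⁻¹).elt = 1 := mul_inv_cancel a.elt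

lemma eq_mul_maxElt {a b : FExp φ} (hb : b.elt = 1) (hg : b.graph = a.graph) :
    a = b * maxElt φ a.elt := by
  refine ext' ?_ (by simp [hb, maxElt])
  rw [mul_graph_of_elt_eq_one hb, hg]
  refine (Subgraph.ext' (Set.union_eq_self_of_subset_right ?_) (Set.union_empty _)).symm
  simp [maxElt, deltaG, Set.insert_subset_iff, a.one_mem, a.elt_mem]

lemma maxElt_mul_genElt_graph (g : G) (x : X) :
    (maxElt φ g * genElt φ x).graph = deltaG φ g ∪ edgeG φ (g, x) := by
  rw [mul_graph, maxElt, genElt, Subgraph.smul_edgeG, mul_one]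

lemma exists_mem_elt_eq {T : Set (FExp φ)} (hgen : ∀ x, genElt φ x ∈ T) (hone : 1 ∈ T)
    (hmul : ∀ a ∈ T, ∀ b ∈ T, a * b ∈ T) (hinv : ∀ a ∈ T, a⁻¹ ∈ T) {g : G}
    (hg : g ∈ Subgroup.closure (Set.range φ)) : ∃ a ∈ T, a.elt = g := by
  induction hg using Subgroup.closure_induction with
  | mem _ hx =>
    obtain ⟨x, rfl⟩ := hx
    exact ⟨genElt φ x, hgen x, rfl⟩
  | one => exact ⟨1, hone, rfl⟩
  | mul _ _ _ _ iha ihb =>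
    obtain ⟨a, ha, rfl⟩ := iha
    obtain ⟨b, hb, rfl⟩ := ihb
    exact ⟨a * b, hmul a ha b hb, rfl⟩
  | inv _ _ ih =>
    obtain ⟨a, ha, rfl⟩ := ih
    exact ⟨a⁻¹, hinv a ha, rfl⟩

end FExp

/-- For an `X`-generated group `G`, the expansion `F(G)` is generated, as an
F-inverse monoid (an algebra under `·`, `⁻¹`, `m` and `1`), by the elements `(Γ_x, x_G)`:
the smallest subset containing these elements and `1` and closed under multiplication,
inversion and the max-operation `m(Γ,g) = (Δ_g,g)` is all of `F(G)`. -/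
theorem statement9 {G : Type u} [Group G] {X : Type v} (φ : X → G)
    (hφ : Subgroup.closure (Set.range φ) = ⊤) :
    ∀ T : Set (FExp φ),
      (∀ x : X, genElt φ x ∈ T) →
      (1 : FExp φ) ∈ T →
      (∀ a ∈ T, ∀ b ∈ T, a * b ∈ T) →
      (∀ a ∈ T, a⁻¹ ∈ T) →
      (∀ a ∈ T, mxOp a ∈ T) →
      ∀ a : FExp φ, a ∈ T := by
  intro T hgen hone hmul hinv hmx
  have hmax (g : G) : maxElt φ g ∈ T := by
    obtain ⟨a, ha, rfl⟩ :=
      FExp.exists_mem_elt_eq hgen hone hmul hinv (hφ ▸ Subgroup.mem_top g)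
    exact hmx a ha
  have hmul_inv {a : FExp φ} (ha : a ∈ T) : ∃ b ∈ T, b.elt = 1 ∧ b.graph = a.graph :=
    ⟨a * a⁻¹, hmul _ ha _ (hinv _ ha), FExp.mul_inv_elt a, FExp.mul_inv_graph a⟩
  have hidem {Γ : Subgraph φ} (hΓ : Γ.IsFinite) (h1 : (1 : G) ∈ Γ.verts) :
      ∃ b ∈ T, b.elt = 1 ∧ b.graph = Γ := by
    refine hΓ.induction (P := fun Γ => ∃ b ∈ T, b.elt = 1 ∧ b.graph = Γ) ?_
      (fun g => hmul_inv (hmax g)) (fun e => ?_) h1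
    · rintro _ _ ⟨a, ha, ha1, rfl⟩ ⟨b, hb, hb1, rfl⟩
      exact ⟨a * b, hmul a ha b hb, by simp [ha1, hb1], FExp.mul_graph_of_elt_eq_one ha1 b⟩
    · rw [← FExp.maxElt_mul_genElt_graph]
      exact hmul_inv (hmul _ (hmax e.1) _ (hgen e.2))
  intro a
  obtain ⟨b, hb, hb1, hbg⟩ := hidem a.finite a.one_mem
  rw [FExp.eq_mul_maxElt hb1 hbg]
  exact hmul b hb _ (hmax a.elt)

end FInvPaper
end

section
/- Let G be an X-generated group, and let F be an X-generated F-inverse monoid such that there is a canonical morphism ν : G → F/σ (i.e., ν is a group morphism with ν(x_G) equal to the σ-class of x_F for all x ∈ X). If s, t ∈ I^m_X are terms such that [s]_G = [t]_G (so that the journeys j₁(s) and j₁(t) are co-terminal) and the subgraph of Cay(G) spanned by j₁(s) contains the subgraph spanned by j₁(t), then [s]_F ≤ [t]_F in the natural partial order of F. -/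
namespace FInvPaper

universe u v w

/-! Write `M_g` for the maximum of the σ-class `ν g`, and attach to every vertex `v` of `Cay(G)`
the idempotent `M_v M_v⁻¹` and to every edge `(g, x)` the idempotent `M_g x_F (M_g x_F)⁻¹`.
Induction along the journey shows that `[w]_F ≤ M_{[w]_G}` and that `[w]_F [w]_F⁻¹` is the meet
of the idempotents attached to the vertices and edges of `⟨j₁(w)⟩`. The inductive step rests on
`M_g M_h = M_g M_g⁻¹ M_{gh}`, which makes conjugation by `M_g` translate these idempotents
along the left action of `g` on `Cay(G)`. Hence a larger journey graph has a smaller range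
idempotent, and two elements below the common bound `M_{[s]_G}` are ordered like their range
idempotents. -/

section NaturalOrder

variable {S : Type*} [InverseMonoid S]

lemma isIdempotentElem_inv_mul_mul {e : S} (he : IsIdempotentElem e) (c : S) :
    IsIdempotentElem (c⁻¹ * e * c) := by
  calc c⁻¹ * e * c * (c⁻¹ * e * c) = c⁻¹ * (e * (c * c⁻¹)) * (e * c) := by
        simp only [mul_assoc]
    _ = c⁻¹ * c * c⁻¹ * (e * e) * c := by
        rw [InverseMonoid.idem_comm e _ he (mul_inv_idem c)]; simp only [mul_assoc]
    _ = c⁻¹ * e * c := by rw [inv_mul_self_mul, he.eq]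

lemma nle_refl (a : S) : nle a a := ⟨1, one_mul 1, (mul_one a).symm⟩

lemma nle.trans {a b c : S} (hab : nle a b) (hbc : nle b c) : nle a c := by
  obtain ⟨e, he, rfl⟩ := hab
  obtain ⟨f, hf, rfl⟩ := hbc
  exact ⟨f * e, idem_mul_idem hf he, mul_assoc c f e⟩

lemma nle_antisymm {a b : S} (hab : nle a b) (hba : nle b a) : a = b := by
  obtain ⟨e, he, rfl⟩ := hab
  obtain ⟨f, hf, hb⟩ := hba
  calc b * e = b * e * f * e := by rw [← hb]
    _ = b * e * f := by
        rw [mul_assoc (b * e) f e, InverseMonoid.idem_comm f e hf he, ← mul_assoc, mul_assoc b e e,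
          he]
    _ = b := hb.symm

lemma nle_of_eq_idem_mul {a b e : S} (he : IsIdempotentElem e) (h : a = e * b) : nle a b := by
  refine ⟨b⁻¹ * e * b, isIdempotentElem_inv_mul_mul he b, ?_⟩
  calc a = e * (b * b⁻¹) * b := by rw [h, mul_assoc e, InverseMonoid.mul_inv_self_mul]
    _ = b * (b⁻¹ * e * b) := by
        rw [InverseMonoid.idem_comm e _ he (mul_inv_idem b)]; simp only [mul_assoc]

lemma nle.eq_mul_inv_mul {a b : S} (h : nle a b) : a = a * a⁻¹ * b := by
  obtain ⟨e, he, rfl⟩ := h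
  symm
  calc b * e * (b * e)⁻¹ * b = b * (e * e * (b⁻¹ * b)) := by
        rw [InverseMonoid.mul_inv_rev, idem_inv he]; simp only [mul_assoc]
    _ = b * b⁻¹ * b * e := by
        rw [he, InverseMonoid.idem_comm e _ he (inv_mul_idem b)]; simp only [mul_assoc]
    _ = b * e := by rw [InverseMonoid.mul_inv_self_mul]

lemma nle.inv_eq {a b : S} (h : nle a b) : a⁻¹ = b⁻¹ * (a * a⁻¹) := by
  rw [← idem_inv (mul_inv_idem a), ← InverseMonoid.mul_inv_rev, ← h.eq_mul_inv_mul]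

lemma nle.inv {a b : S} (h : nle a b) : nle a⁻¹ b⁻¹ := ⟨a * a⁻¹, mul_inv_idem a, h.inv_eq⟩

lemma nle.mul_left {a b : S} (h : nle a b) (c : S) : nle (c * a) (c * b) := by
  obtain ⟨e, he, rfl⟩ := h
  exact ⟨e, he, (mul_assoc c b e).symm⟩

lemma nle.mul_right {a b : S} (h : nle a b) (c : S) : nle (a * c) (b * c) :=
  nle_of_eq_idem_mul (mul_inv_idem a) (by rw [← mul_assoc, ← h.eq_mul_inv_mul])

lemma nle.mul {a b c d : S} (hab : nle a b) (hcd : nle c d) : nle (a * c) (b * d) :=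
  (hab.mul_right c).trans (hcd.mul_left b)

lemma nle.mul_inv {a b : S} (h : nle a b) : nle (a * a⁻¹) (b * b⁻¹) := h.mul h.inv

lemma nle_one {e : S} (he : IsIdempotentElem e) : nle e 1 := ⟨e, he, (one_mul e).symm⟩

lemma nle_iff_mul_eq {ε e : S} (hε : IsIdempotentElem ε) (he : IsIdempotentElem e) :
    nle ε e ↔ ε * e = ε := by
  constructor
  · rintro ⟨x, hx, rfl⟩
    rw [mul_assoc, InverseMonoid.idem_comm x e hx he, ← mul_assoc, he.eq]
  · exact fun h => ⟨ε, hε, h.symm.trans (InverseMonoid.idem_comm ε e hε he)⟩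

lemma nle_mul_iff {ε e f : S} (hε : IsIdempotentElem ε) (he : IsIdempotentElem e)
    (hf : IsIdempotentElem f) : nle ε (e * f) ↔ nle ε e ∧ nle ε f := by
  refine ⟨fun h => ⟨h.trans ⟨f, hf, rfl⟩, h.trans (nle_of_eq_idem_mul he rfl)⟩, ?_⟩
  rintro ⟨h₁, h₂⟩
  rw [nle_iff_mul_eq hε (idem_mul_idem he hf), ← mul_assoc, (nle_iff_mul_eq hε he).1 h₁,
    (nle_iff_mul_eq hε hf).1 h₂]

lemma nle_conj_iff {ε y : S} (hε : IsIdempotentElem ε) (hy : IsIdempotentElem y) (c : S) :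
    nle ε (c * y * c⁻¹) ↔ nle ε (c * c⁻¹) ∧ nle (c⁻¹ * ε * c) y := by
  constructor
  · intro h
    have hle : nle (c * y * c⁻¹) (c * c⁻¹) := by
      simpa only [mul_one] using ((nle_one hy).mul_left c).mul_right c⁻¹
    have hback : c⁻¹ * (c * y * c⁻¹) * c = c⁻¹ * c * y := by
      calc c⁻¹ * (c * y * c⁻¹) * c = c⁻¹ * c * (y * (c⁻¹ * c)) := by simp only [mul_assoc]
        _ = c⁻¹ * c * (c⁻¹ * c * y) := by rw [InverseMonoid.idem_comm y _ hy (inv_mul_idem c)]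
        _ = c⁻¹ * c * y := by rw [← mul_assoc, inv_mul_idem c]
    exact ⟨h.trans hle,
      ((h.mul_left c⁻¹).mul_right c).trans (nle_of_eq_idem_mul (inv_mul_idem c) hback)⟩
  · rintro ⟨h₁, h₂⟩
    have hr : ε * (c * c⁻¹) = ε := (nle_iff_mul_eq hε (mul_inv_idem c)).1 h₁
    have hl : c * c⁻¹ * ε = ε := by rw [← InverseMonoid.idem_comm ε _ hε (mul_inv_idem c), hr]
    have hε' : ε = c * (c⁻¹ * ε * c) * c⁻¹ := by
      calc ε = c * c⁻¹ * ε * (c * c⁻¹) := by rw [hl, hr]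
        _ = c * (c⁻¹ * ε * c) * c⁻¹ := by simp only [mul_assoc]
    rw [hε']
    exact (h₂.mul_left c).mul_right c⁻¹

lemma mul_mul_inv_mul (x y : S) : x * y * (x * y)⁻¹ = x * (y * y⁻¹) * x⁻¹ := by
  rw [InverseMonoid.mul_inv_rev]; simp only [mul_assoc]

lemma idem_mul_mul_inv {e : S} (he : IsIdempotentElem e) (x : S) :
    e * x * (e * x)⁻¹ = e * (x * x⁻¹) := by
  rw [mul_mul_inv_mul, idem_inv he, mul_assoc, ← InverseMonoid.idem_comm e _ he (mul_inv_idem x),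
    ← mul_assoc, he.eq]

lemma nle.inv_mul_inv_inv {a b : S} (h : nle a b) : a⁻¹ * a⁻¹⁻¹ = b⁻¹ * a * (b⁻¹ * a)⁻¹ := by
  rw [mul_mul_inv_mul, InverseMonoid.inv_inv, InverseMonoid.inv_inv, ← h.inv_eq]
  calc a⁻¹ * a = a⁻¹ * (a * a⁻¹ * b) := by rw [← h.eq_mul_inv_mul]
    _ = a⁻¹ * b := by rw [← mul_assoc, ← mul_assoc, inv_mul_self_mul]

lemma nle.inv_mul_mul_eq {a b ε : S} (hab : nle a b) (hε : IsIdempotentElem ε)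
    (hεa : nle ε (a * a⁻¹)) : a⁻¹ * ε * a = b⁻¹ * ε * b := by
  have hr : ε * (a * a⁻¹) = ε := (nle_iff_mul_eq hε (mul_inv_idem a)).1 hεa
  have hl : a * a⁻¹ * ε = ε := by rw [← InverseMonoid.idem_comm ε _ hε (mul_inv_idem a), hr]
  calc a⁻¹ * ε * a = b⁻¹ * (a * a⁻¹) * ε * (a * a⁻¹ * b) := by
        rw [← hab.inv_eq, ← hab.eq_mul_inv_mul]
    _ = b⁻¹ * (a * a⁻¹ * ε * (a * a⁻¹)) * b := by simp only [mul_assoc]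
    _ = b⁻¹ * ε * b := by rw [hl, hr]

lemma nle_of_mul_inv_nle {a b c : S} (hac : nle a c) (hbc : nle b c)
    (h : nle (a * a⁻¹) (b * b⁻¹)) : nle a b := by
  refine nle_of_eq_idem_mul (mul_inv_idem a) ?_
  calc a = a * a⁻¹ * (b * b⁻¹) * c := by
        rw [(nle_iff_mul_eq (mul_inv_idem a) (mul_inv_idem b)).1 h, ← hac.eq_mul_inv_mul]
    _ = a * a⁻¹ * b := by rw [mul_assoc (a * a⁻¹), ← hbc.eq_mul_inv_mul]

lemma σclass_mul (a b : S) : σclass (a * b) = σclass a * σclass b := rfl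

lemma σclass_inv (a : S) : σclass a⁻¹ = (σclass a)⁻¹ := rfl

end NaturalOrder

section ClassMax

variable {F : Type*} [FInverseMonoid F]

lemma mx_congr {a b : F} (h : sigma a b) : mx a = mx b :=
  nle_antisymm
    ((FInverseMonoid.mx_isMaxOp b).2 _ (sigma_trans (FInverseMonoid.mx_isMaxOp a).1 h))
    ((FInverseMonoid.mx_isMaxOp a).2 _ (sigma_trans (FInverseMonoid.mx_isMaxOp b).1 (sigma_symm h)))

def classMax : GQuot F → F := Quotient.lift mx fun _ _ => mx_congr

lemma classMax_σclass (a : F) : classMax (σclass a) = mx a := rfl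

lemma σclass_classMax (c : GQuot F) : σclass (classMax c) = c := by
  induction c using Quotient.ind with
  | _ a => exact Quotient.sound (FInverseMonoid.mx_isMaxOp a).1

lemma nle_classMax {a : F} {c : GQuot F} (h : σclass a = c) : nle a (classMax c) := by
  subst h
  exact (FInverseMonoid.mx_isMaxOp a).2 a (sigma_refl a)

lemma classMax_one : classMax (1 : GQuot F) = 1 := by
  have h := (nle_classMax (a := (1 : F)) rfl).eq_mul_inv_mul
  rw [idem_inv (one_mul 1), one_mul, one_mul] at h
  exact h.symm

lemma classMax_inv (c : GQuot F) : (classMax c)⁻¹ = classMax c⁻¹ := by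
  refine nle_antisymm (nle_classMax (by rw [σclass_inv, σclass_classMax])) ?_
  have h : nle (classMax c⁻¹)⁻¹ (classMax c) := nle_classMax (by
    rw [σclass_inv, σclass_classMax, inv_inv])
  simpa only [InverseMonoid.inv_inv] using h.inv

lemma classMax_mul (c d : GQuot F) :
    classMax c * classMax d = classMax c * (classMax c)⁻¹ * classMax (c * d) := by
  set A := classMax c
  have hAB : nle (A * classMax d) (classMax (c * d)) :=
    nle_classMax (by rw [σclass_mul, σclass_classMax, σclass_classMax])
  have hA : nle (A⁻¹ * classMax (c * d)) (classMax d) :=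
    nle_classMax (by rw [σclass_mul, σclass_inv, σclass_classMax, σclass_classMax]; group)
  refine nle_antisymm ?_ ?_
  · simpa only [← mul_assoc, InverseMonoid.mul_inv_self_mul] using hAB.mul_left (A * A⁻¹)
  · simpa only [← mul_assoc] using hA.mul_left A

lemma nle_mul_inv_classMax_mul_iff {ε : F} (hε : IsIdempotentElem ε) {c : GQuot F} (d : GQuot F)
    (b : F) (hεc : nle ε (classMax c * (classMax c)⁻¹)) :
    nle ε (classMax (c * d) * b * (classMax (c * d) * b)⁻¹) ↔
      nle ((classMax c)⁻¹ * ε * classMax c) (classMax d * b * (classMax d * b)⁻¹) := by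
  set A := classMax c
  have hconj : A * (classMax d * b * (classMax d * b)⁻¹) * A⁻¹ =
      A * A⁻¹ * (classMax (c * d) * b * (classMax (c * d) * b)⁻¹) := by
    rw [← mul_mul_inv_mul, ← mul_assoc, classMax_mul, mul_assoc (A * A⁻¹),
      idem_mul_mul_inv (mul_inv_idem A)]
  calc nle ε (classMax (c * d) * b * (classMax (c * d) * b)⁻¹)
      ↔ nle ε (A * A⁻¹) ∧ nle ε (classMax (c * d) * b * (classMax (c * d) * b)⁻¹) :=
        (and_iff_right hεc).symm
    _ ↔ nle ε (A * (classMax d * b * (classMax d * b)⁻¹) * A⁻¹) := by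
        rw [hconj, nle_mul_iff hε (mul_inv_idem _) (mul_inv_idem _)]
    _ ↔ _ := (nle_conj_iff hε (mul_inv_idem _) A).trans (and_iff_right hεc)

end ClassMax

section Translation

variable {G : Type*} [Group G] {X : Type*} {φ : X → G}

lemma smul_union (g : G) (Γ Δ : Subgraph φ) : g • (Γ ∪ Δ) = g • Γ ∪ g • Δ :=
  Subgraph.ext' (Set.image_union _ _ _) (Set.image_union _ _ _)

lemma smul_vertexG (g h : G) : g • vertexG φ h = vertexG φ (g * h) :=
  Subgraph.ext' (Set.image_singleton) (Set.image_empty _)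

lemma smul_edgeG (g : G) (e : G × X) : g • edgeG φ e = edgeG φ (g * e.1, e.2) := by
  refine Subgraph.ext' ?_ (Set.image_singleton)
  simp [edgeG, Set.image_insert_eq, mul_assoc]

lemma union_vertexG_union {Γ Δ : Subgraph φ} {v : G} (hv : v ∈ Δ.verts) :
    Γ ∪ vertexG φ v ∪ Δ = Γ ∪ Δ := by
  refine Subgraph.ext' ?_ ?_
  · show Γ.verts ∪ {v} ∪ Δ.verts = Γ.verts ∪ Δ.verts
    rw [Set.union_singleton, Set.insert_union, Set.insert_eq_of_mem (Set.mem_union_right _ hv)]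
  · show Γ.edges ∪ ∅ ∪ Δ.edges = Γ.edges ∪ Δ.edges
    rw [Set.union_empty]

lemma pathGraph_mul (u : List (X ⊕ X)) (g h : G) :
    pathGraph φ (g * h) u = g • pathGraph φ h u := by
  induction u generalizing h with
  | nil => exact (smul_vertexG g h).symm
  | cons y u ih =>
    cases y with
    | inl x => simp only [pathGraph, smul_union, smul_edgeG, mul_assoc, ih]
    | inr x => simp only [pathGraph, smul_union, smul_edgeG, mul_assoc, ih]

lemma pathGraph_eq_smul (g : G) (u : List (X ⊕ X)) : pathGraph φ g u = g • pathGraph φ 1 u := by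
  rw [← pathGraph_mul, mul_one]

lemma journeyGraph_mul (u : List (X ⊕ X)) (l : List (List (X ⊕ X) × List (X ⊕ X))) (g h : G) :
    journeyGraph φ (g * h) u l = g • journeyGraph φ h u l := by
  induction l generalizing u h with
  | nil => exact pathGraph_mul u g h
  | cons p l ih => simp only [journeyGraph, smul_union, pathGraph_mul, mul_assoc, ih]

lemma journeyGraph_eq_smul (g : G) (u : List (X ⊕ X)) (l : List (List (X ⊕ X) × List (X ⊕ X))) :
    journeyGraph φ g u l = g • journeyGraph φ 1 u l := by
  rw [← journeyGraph_mul, mul_one]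

lemma start_mem_pathGraph (g : G) (u : List (X ⊕ X)) : g ∈ (pathGraph φ g u).verts := by
  cases u with
  | nil => exact Set.mem_singleton g
  | cons y u =>
    cases y with
    | inl x => exact Or.inl (Set.mem_insert g _)
    | inr x => exact Or.inl (Or.inr (by simp))

lemma start_mem_journeyGraph (g : G) (u : List (X ⊕ X))
    (l : List (List (X ⊕ X) × List (X ⊕ X))) : g ∈ (journeyGraph φ g u l).verts := by
  cases l with
  | nil => exact start_mem_pathGraph g u
  | cons p l => exact Or.inl (start_mem_pathGraph g u)

lemma termVal_cons {M : Type*} [Monoid M] [Inv M] (h : X → M) (mop : M → M)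
    (u v u' : List (X ⊕ X)) (l : List (List (X ⊕ X) × List (X ⊕ X))) :
    termVal h mop (u, (v, u') :: l) = wordVal h u * mop (wordVal h v) * termVal h mop (u', l) := by
  simp only [termVal, List.map_cons, List.prod_cons, mul_assoc]

end Translation

section Represents

variable {G : Type*} [Group G] {X : Type*} {φ : X → G} {F : Type*} [FInverseMonoid F]
  (ν : G →* GQuot F) (f : X → F)

def BelowGraph (ε : F) (Γ : Subgraph φ) : Prop :=
  (∀ v ∈ Γ.verts, nle ε (classMax (ν v) * (classMax (ν v))⁻¹)) ∧
    ∀ e ∈ Γ.edges, nle ε (classMax (ν e.1) * f e.2 * (classMax (ν e.1) * f e.2)⁻¹)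

/-- The range idempotent `a a⁻¹` is the meet of the idempotents attached to `Γ`. -/
def Represents (a : F) (Γ : Subgraph φ) (g : G) : Prop :=
  σclass a = ν g ∧ ∀ ε : F, IsIdempotentElem ε → (nle ε (a * a⁻¹) ↔ BelowGraph ν f ε Γ)

variable {ν f}

lemma belowGraph_union {ε : F} {Γ Δ : Subgraph φ} :
    BelowGraph ν f ε (Γ ∪ Δ) ↔ BelowGraph ν f ε Γ ∧ BelowGraph ν f ε Δ := by
  simp only [BelowGraph, Subgraph.union_verts, Subgraph.union_edges, Set.mem_union, or_imp,
    forall_and]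
  tauto

lemma BelowGraph.anti {ε : F} {Γ Δ : Subgraph φ} (h : BelowGraph ν f ε Γ) (hΔ : Δ ⊆ Γ) :
    BelowGraph ν f ε Δ :=
  ⟨fun v hv => h.1 v (hΔ.1 hv), fun e he => h.2 e (hΔ.2 he)⟩

lemma belowGraph_vertexG {ε : F} (g : G) :
    BelowGraph ν f ε (vertexG φ g) ↔ nle ε (classMax (ν g) * (classMax (ν g))⁻¹) := by
  simp [BelowGraph, vertexG]

lemma belowGraph_smul {ε : F} (hε : IsIdempotentElem ε) (g : G) (Γ : Subgraph φ)
    (hεg : nle ε (classMax (ν g) * (classMax (ν g))⁻¹)) :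
    BelowGraph ν f ε (g • Γ) ↔
      BelowGraph ν f ((classMax (ν g))⁻¹ * ε * classMax (ν g)) Γ := by
  simp only [BelowGraph, Subgraph.smul_verts, Subgraph.smul_edges, Set.forall_mem_image, map_mul]
  have hv := fun h => nle_mul_inv_classMax_mul_iff hε (ν h) 1 hεg
  simp only [mul_one] at hv
  simp only [hv, nle_mul_inv_classMax_mul_iff hε _ _ hεg]

lemma belowGraph_edgeG (hν : ∀ x : X, ν (φ x) = σclass (f x)) {ε : F} (g : G) (x : X) :
    BelowGraph ν f ε (edgeG φ (g, x)) ↔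
      nle ε (classMax (ν g) * f x * (classMax (ν g) * f x)⁻¹) := by
  set A := classMax (ν g)
  have hsrc : nle (A * f x * (A * f x)⁻¹) (A * A⁻¹) := by
    simpa only [mul_mul_inv_mul, mul_one] using
      ((nle_one (mul_inv_idem (f x))).mul_left A).mul_right A⁻¹
  have htgt : nle (A * f x) (classMax (ν (g * φ x))) := by
    refine ((nle_classMax (hν x).symm).mul_left A).trans ?_
    rw [classMax_mul, map_mul]
    exact nle_of_eq_idem_mul (mul_inv_idem A) rfl
  simp only [BelowGraph, edgeG, Set.mem_insert_iff, Set.mem_singleton_iff, forall_eq_or_imp,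
    forall_eq]
  exact ⟨fun h => h.2, fun h => ⟨⟨h.trans hsrc, h.trans htgt.mul_inv⟩, h⟩⟩

lemma Represents.nle_classMax {a : F} {Γ : Subgraph φ} {g : G} (h : Represents ν f a Γ g) :
    nle a (classMax (ν g)) :=
  FInvPaper.nle_classMax h.1

lemma represents_classMax (g : G) : Represents ν f (classMax (ν g)) (vertexG φ g) g :=
  ⟨σclass_classMax _, fun _ _ => (belowGraph_vertexG g).symm⟩

lemma represents_gen (hν : ∀ x : X, ν (φ x) = σclass (f x)) (x : X) :
    Represents ν f (f x) (edgeG φ (1, x)) (φ x) :=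
  ⟨(hν x).symm, fun _ _ => by rw [belowGraph_edgeG hν, map_one, classMax_one, one_mul]⟩

lemma represents_gen_inv (hν : ∀ x : X, ν (φ x) = σclass (f x)) (x : X) :
    Represents ν f (f x)⁻¹ (edgeG φ ((φ x)⁻¹, x)) (φ x)⁻¹ :=
  ⟨by rw [σclass_inv, map_inv, hν], fun _ _ => by
    rw [belowGraph_edgeG hν, map_inv, ← classMax_inv, (nle_classMax (hν x).symm).inv_mul_inv_inv]⟩

lemma Represents.mul {a b : F} {Γ Δ : Subgraph φ} {g h : G} (ha : Represents ν f a Γ g)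
    (hb : Represents ν f b Δ h) : Represents ν f (a * b) (Γ ∪ g • Δ) (g * h) := by
  refine ⟨by rw [σclass_mul, ha.1, hb.1, map_mul], fun ε hε => ?_⟩
  rw [mul_mul_inv_mul, nle_conj_iff hε (mul_inv_idem b), belowGraph_union]
  refine (and_congr_right fun hεa => ?_).trans (and_congr_left' (ha.2 ε hε))
  rw [ha.nle_classMax.inv_mul_mul_eq hε hεa, hb.2 _ (isIdempotentElem_inv_mul_mul hε _),
    belowGraph_smul hε g Δ (hεa.trans ha.nle_classMax.mul_inv)]

lemma Represents.mul_classMax_mul {a b : F} {Γ Δ : Subgraph φ} {g k : G}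
    (ha : Represents ν f a Γ g) (h : G) (hb : Represents ν f b Δ k) (hΔ : 1 ∈ Δ.verts) :
    Represents ν f (a * classMax (ν h) * b) (Γ ∪ (g * h) • Δ) (g * h * k) := by
  have hgh : g * h ∈ ((g * h) • Δ).verts := ⟨1, hΔ, mul_one _⟩
  have hab := (ha.mul (represents_classMax h)).mul hb
  rwa [smul_vertexG, union_vertexG_union hgh] at hab

lemma represents_path (hν : ∀ x : X, ν (φ x) = σclass (f x)) (u : List (X ⊕ X)) :
    Represents ν f (wordVal f u) (pathGraph φ 1 u) (wordVal φ u) := by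
  induction u with
  | nil =>
    have h := represents_classMax (f := f) (φ := φ) (ν := ν) 1
    rwa [map_one, classMax_one] at h
  | cons y u ih =>
    cases y with
    | inl x =>
      show Represents ν f (f x * wordVal f u) (edgeG φ (1, x) ∪ pathGraph φ (1 * φ x) u)
        (φ x * wordVal φ u)
      rw [one_mul, pathGraph_eq_smul]
      exact (represents_gen hν x).mul ih
    | inr x =>
      show Represents ν f ((f x)⁻¹ * wordVal f u)
        (edgeG φ (1 * (φ x)⁻¹, x) ∪ pathGraph φ (1 * (φ x)⁻¹) u) ((φ x)⁻¹ * wordVal φ u)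
      rw [one_mul, pathGraph_eq_smul]
      exact (represents_gen_inv hν x).mul ih

lemma represents_journey (hν : ∀ x : X, ν (φ x) = σclass (f x)) (t : MTerm X) :
    Represents ν f (termVal f mx t) (journeyGraph φ 1 t.1 t.2) (termVal φ id t) := by
  obtain ⟨u, l⟩ := t
  induction l generalizing u with
  | nil => simpa [termVal, journeyGraph] using represents_path hν u
  | cons p l ih =>
    obtain ⟨v, u'⟩ := p
    have hv : mx (wordVal f v) = classMax (ν (wordVal φ v)) := by
      rw [← (represents_path hν v).1, classMax_σclass]
    rw [termVal_cons, termVal_cons, hv]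
    show Represents ν f _ (pathGraph φ 1 u ∪ journeyGraph φ (1 * wordVal φ u * wordVal φ v) u' l) _
    rw [one_mul, journeyGraph_eq_smul]
    exact (represents_path hν u).mul_classMax_mul _ (ih u') (start_mem_journeyGraph 1 u' l)

end Represents

theorem statement12_general {G : Type u} [Group G] {X : Type v} (φ : X → G)
    {F : Type w} [FInverseMonoid F] (f : X → F)
    (ν : G →* GQuot F) (hν : ∀ x : X, ν (φ x) = σclass (f x))
    (s t : MTerm X)
    (hval : termVal φ id s = termVal φ id t)
    (hsub : journeyGraph φ 1 t.1 t.2 ⊆ journeyGraph φ 1 s.1 s.2) :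
    nle (termVal f mx s) (termVal f mx t) := by
  have hs := represents_journey hν s
  have ht := represents_journey hν t
  rw [hval] at hs
  refine nle_of_mul_inv_nle hs.nle_classMax ht.nle_classMax ((ht.2 _ (mul_inv_idem _)).2 ?_)
  exact ((hs.2 _ (mul_inv_idem _)).1 (nle_refl _)).anti hsub

/-- Let `G` be an `X`-generated group and `F` an `X`-generated F-inverse
monoid admitting a canonical morphism `ν : G → F/σ`.  If `s, t ∈ I^m_X` are terms with
`[s]_G = [t]_G` (so the journeys `j₁(s)`, `j₁(t)` are co-terminal) and the subgraph of
`Cay(G)` spanned by `j₁(s)` contains the one spanned by `j₁(t)`, then `[s]_F ≤ [t]_F` in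
the natural partial order of `F`. -/
theorem statement12 {G : Type u} [Group G] {X : Type v} (φ : X → G)
    (hG : Subgroup.closure (Set.range φ) = ⊤)
    {F : Type w} [FInverseMonoid F] (f : X → F)
    (hF : ∀ T : Set F, (∀ x : X, f x ∈ T) → (1 : F) ∈ T →
      (∀ a ∈ T, ∀ b ∈ T, a * b ∈ T) → (∀ a ∈ T, a⁻¹ ∈ T) → (∀ a ∈ T, mx a ∈ T) →
      ∀ s : F, s ∈ T)
    (ν : G →* GQuot F) (hν : ∀ x : X, ν (φ x) = σclass (f x))
    (s t : MTerm X)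
    (hval : termVal φ id s = termVal φ id t)
    (hsub : journeyGraph φ 1 t.1 t.2 ⊆ journeyGraph φ 1 s.1 s.2) :
    nle (termVal f mx s) (termVal f mx t) :=
  statement12_general φ f ν hν s t hval hsub

end FInvPaper
end
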